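/- Let p = Σ_{S ⊆ {1,…,n}, |S| = d} c_S·∏_{i∈S} x_i be a multiaffine d-homogeneous polynomial with nonnegative coefficients, d ≥ 2, that is strongly log-concave at 𝟙. Then for every subset τ ⊆ {1,…,n} with |τ| ≤ d−2, the symmetric matrix A_τ, indexed by pairs i,j ∉ τ, with entries A_τ(i,j) = (∂_i ∂_j ∂_τ p)(𝟙) for i ≠ j and A_τ(i,i) = 0 (where ∂_τ = ∏_{i∈τ} ∂_i), has at most one strictly positive eigenvalue counted with multiplicity. Consequently the weighted simplicial complex X^p, whose maximal faces are the sets S with c_S > 0 weighted by w(S) = c_S, is a 0-local spectral expander. -/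

import Mathlib

open MvPolynomial Matrix Finset
open scoped Classical

noncomputable section

abbrev MP (n : ℕ) := MvPolynomial (Fin n) ℝ

/-- Iterated partial derivative along a list of indices. -/
def derivList {n : ℕ} (l : List (Fin n)) (q : MP n) : MP n :=
  l.foldr (fun i r => pderiv i r) q

/-- Gradient at the all-ones point. -/
def gradOne {n : ℕ} (q : MP n) : Fin n → ℝ := fun i => eval (fun _ => (1:ℝ)) (pderiv i q)

/-- Hessian at the all-ones point. -/
def hessOne {n : ℕ} (q : MP n) : Matrix (Fin n) (Fin n) ℝ :=
  Matrix.of fun i j => eval (fun _ => (1:ℝ)) (pderiv i (pderiv j q))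

/-- `q` is log-concave at the all-ones point: `q(𝟙)·∇²q(𝟙) − ∇q(𝟙)∇q(𝟙)ᵀ` is NSD,
equivalently its negation is PSD. -/
def LogConcaveAtOne {n : ℕ} (q : MP n) : Prop :=
  (vecMulVec (gradOne q) (gradOne q) - eval (fun _ => (1:ℝ)) q • hessOne q).PosSemidef

/-- `q` is strongly log-concave at the all-ones point. -/
def StronglyLogConcaveAtOne {n : ℕ} (q : MP n) : Prop :=
  ∀ l : List (Fin n), LogConcaveAtOne (derivList l q)

/-- Iterated partial derivative `∂_τ` with respect to all variables indexed by `τ`. -/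
def derivSet {n : ℕ} (τ : Finset (Fin n)) (q : MP n) : MP n :=
  derivList τ.toList q

/-- The simplicial complex `X^p` of subsets of supports of monomials of `p`,
given the coefficient function `c`. -/
def Xp (n : ℕ) (c : Finset (Fin n) → ℝ) : Finset (Finset (Fin n)) :=
  Finset.univ.filter (fun τ : Finset (Fin n) => ∃ S, c S ≠ 0 ∧ τ ⊆ S)

/-- The (zero-padded) weighted adjacency matrix of the 1-skeleton of the link `X_τ`. -/
def linkMat (n : ℕ) (X : Finset (Finset (Fin n))) (w : Finset (Fin n) → ℝ)
    (τ : Finset (Fin n)) : Matrix (Fin n) (Fin n) ℝ :=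
  Matrix.of fun i j =>
    if i ≠ j ∧ i ∉ τ ∧ j ∉ τ ∧ insert i (insert j τ) ∈ X then w (insert i (insert j τ)) else 0

/-!
For multiaffine `p`, `∂ᵢ∂ⱼ∂_τ p` vanishes when `i = j` or `i ∈ τ` or `j ∈ τ`, so `A_τ` is the
full Hessian at `𝟙` of `q = ∂_τ p`. If `q(𝟙) > 0`, log-concavity of `q` at `𝟙` makes this Hessian
negative semidefinite on the hyperplane `∇q(𝟙)ᗮ`; if `q(𝟙) = 0`, nonnegativity of the
coefficients forces `A_τ = 0`. A symmetric matrix whose quadratic form is nonpositive on a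
hyperplane has at most one positive eigenvalue: two orthonormal eigenvectors with positive
eigenvalues would span a plane meeting the hyperplane in a nonzero vector.

For the expander statement, a balanced weighting with `w S = c S` on facets is forced to be
`w σ = (d - |σ|)! · ∂_σ p(𝟙)`, by induction on `d - |σ|`: each facet `S ⊇ σ` contains exactly
`d - |σ|` faces covering `σ`. Hence the link matrix of `τ` is the nonnegative multiple
`(d - |τ| - 2)! · A_τ`.
-/

local notation "𝟙" => fun _ => (1 : ℝ)

namespace MvPolynomial

variable {σ R : Type*} [CommSemiring R]

theorem pderiv_pderiv_comm (i j : σ) (q : MvPolynomial σ R) :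
    pderiv i (pderiv j q) = pderiv j (pderiv i q) := by
  induction q using MvPolynomial.induction_on' with
  | monomial s a =>
    rcases eq_or_ne i j with rfl | hij
    · rfl
    have hj : (s - Finsupp.single j 1 : σ →₀ ℕ) i = s i := by simp [hij.symm]
    have hi : (s - Finsupp.single i 1 : σ →₀ ℕ) j = s j := by simp [hij]
    simp only [pderiv_monomial, hi, hj, tsub_right_comm, mul_right_comm]
  | add p q hp hq => simp only [map_add, hp, hq]

theorem pderiv_prod_X [DecidableEq σ] (a : σ) (U : Finset σ) :
    pderiv a (∏ k ∈ U, X k : MvPolynomial σ R) =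
      if a ∈ U then ∏ k ∈ U.erase a, X k else 0 := by
  induction U using Finset.induction with
  | empty => simp
  | @insert b U hb ih =>
    rw [prod_insert hb, pderiv_mul, ih]
    rcases eq_or_ne a b with rfl | hab
    · simp [hb, erase_insert hb]
    · by_cases haU : a ∈ U
      · simp [haU, pderiv_X_of_ne hab.symm, erase_insert_of_ne hab.symm,
          prod_insert fun h => hb (mem_of_mem_erase h)]
      · simp [haU, hab, pderiv_X_of_ne hab.symm]

end MvPolynomial

variable {n : ℕ}

theorem pderiv_derivList (i : Fin n) (l : List (Fin n)) (q : MP n) :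
    pderiv i (derivList l q) = derivList l (pderiv i q) := by
  induction l with
  | nil => rfl
  | cons j l ih => exact (pderiv_pderiv_comm i j _).trans (congrArg (pderiv j) ih)

theorem derivList_perm {l l' : List (Fin n)} (h : l.Perm l') (q : MP n) :
    derivList l q = derivList l' q := by
  induction h with
  | nil => rfl
  | cons i _ ih => exact congrArg (pderiv i) ih
  | swap i j l => exact pderiv_pderiv_comm j i _
  | trans _ _ ih₁ ih₂ => exact ih₁.trans ih₂

@[simp]
theorem derivSet_empty (q : MP n) : derivSet ∅ q = q := by
  simp [derivSet, derivList]

theorem derivSet_insert {a : Fin n} {τ : Finset (Fin n)} (ha : a ∉ τ) (q : MP n) :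
    derivSet (insert a τ) q = pderiv a (derivSet τ q) :=
  derivList_perm (toList_insert ha) q

theorem pderiv_derivSet (i : Fin n) (τ : Finset (Fin n)) (q : MP n) :
    pderiv i (derivSet τ q) = derivSet τ (pderiv i q) :=
  pderiv_derivList i _ q

theorem derivSet_zero (τ : Finset (Fin n)) : derivSet τ (0 : MP n) = 0 := by
  induction τ using Finset.induction with
  | empty => simp
  | @insert a τ ha ih => rw [derivSet_insert ha, ih, map_zero]

theorem derivSet_sum {α : Type*} (τ : Finset (Fin n)) (s : Finset α) (f : α → MP n) :
    derivSet τ (∑ a ∈ s, f a) = ∑ a ∈ s, derivSet τ (f a) := by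
  induction τ using Finset.induction with
  | empty => simp
  | @insert b τ hb ih => simp only [derivSet_insert hb, ih, map_sum]

theorem derivSet_C_mul (τ : Finset (Fin n)) (a : ℝ) (q : MP n) :
    derivSet τ (C a * q) = C a * derivSet τ q := by
  induction τ using Finset.induction with
  | empty => simp
  | @insert b τ hb ih => rw [derivSet_insert hb, derivSet_insert hb, ih, pderiv_C_mul]

theorem derivSet_prod_X (τ T : Finset (Fin n)) :
    derivSet τ (∏ k ∈ T, X k : MP n) = if τ ⊆ T then ∏ k ∈ T \ τ, X k else 0 := by
  induction τ using Finset.induction with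
  | empty => simp
  | @insert a τ ha ih =>
    rw [derivSet_insert ha, ih]
    by_cases hτ : τ ⊆ T
    · by_cases haT : a ∈ T
      · have hdiff : (T \ τ).erase a = T \ insert a τ := by
          ext; simp only [mem_erase, mem_sdiff, mem_insert, not_or]; tauto
        simp [hτ, haT, ha, pderiv_prod_X, hdiff, insert_subset_iff]
      · simp [hτ, haT, pderiv_prod_X, insert_subset_iff]
    · simp [hτ, insert_subset_iff]

theorem LogConcaveAtOne.dotProduct_hessOne_mulVec_nonpos {q : MP n} (hq : LogConcaveAtOne q)
    (hpos : 0 < eval 𝟙 q) {x : Fin n → ℝ} (hx : gradOne q ⬝ᵥ x = 0) :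
    x ⬝ᵥ hessOne q *ᵥ x ≤ 0 := by
  have := hq.dotProduct_mulVec_nonneg x
  simp only [star_trivial, sub_mulVec, vecMulVec_mulVec, hx, MulOpposite.op_zero, zero_smul,
    zero_sub, dotProduct_neg, smul_mulVec, dotProduct_smul, smul_eq_mul, Left.nonneg_neg_iff] at this
  exact nonpos_of_mul_nonpos_right this hpos

theorem Matrix.IsHermitian.card_pos_eigenvalues_le_one {ι : Type*} [Fintype ι] [DecidableEq ι]
    {A : Matrix ι ι ℝ} (hA : A.IsHermitian) (g : ι → ℝ)
    (hg : ∀ x, g ⬝ᵥ x = 0 → x ⬝ᵥ A *ᵥ x ≤ 0) : #{i | 0 < hA.eigenvalues i} ≤ 1 := by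
  by_contra! hcard
  obtain ⟨i, hi, j, hj, hij⟩ := one_lt_card.mp hcard
  simp only [mem_filter, mem_univ, true_and] at hi hj
  set u : ι → ℝ := ⇑(hA.eigenvectorBasis i)
  set v : ι → ℝ := ⇑(hA.eigenvectorBasis j)
  have hdot (k l : ι) :
      (⇑(hA.eigenvectorBasis k) : ι → ℝ) ⬝ᵥ ⇑(hA.eigenvectorBasis l) = if k = l then 1 else 0 := by
    rw [← orthonormal_iff_ite.mp hA.eigenvectorBasis.orthonormal k l,
      EuclideanSpace.inner_eq_star_dotProduct, star_trivial, dotProduct_comm]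
  obtain ⟨a, b, hab, hperp⟩ : ∃ a b : ℝ, (a ≠ 0 ∨ b ≠ 0) ∧ g ⬝ᵥ (a • u + b • v) = 0 := by
    by_cases hgu : g ⬝ᵥ u = 0
    · exact ⟨1, 0, by simp, by simp [hgu]⟩
    · refine ⟨g ⬝ᵥ v, -(g ⬝ᵥ u), by simp [hgu], ?_⟩
      simp only [dotProduct_add, dotProduct_smul, smul_eq_mul]
      ring
  have hform : (a • u + b • v) ⬝ᵥ A *ᵥ (a • u + b • v) =
      hA.eigenvalues i * a ^ 2 + hA.eigenvalues j * b ^ 2 := by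
    simp only [mulVec_add, mulVec_smul, u, v, hA.mulVec_eigenvectorBasis, add_dotProduct,
      dotProduct_add, smul_dotProduct, dotProduct_smul, hdot, hij, hij.symm, ↓reduceIte,
      smul_eq_mul, mul_one, mul_zero, add_zero, zero_add]
    ring
  have := hg _ hperp
  rcases hab with ha | hb
  · nlinarith [sq_pos_of_ne_zero ha, sq_nonneg b]
  · nlinarith [sq_pos_of_ne_zero hb, sq_nonneg a]

theorem Finset.card_filter_powerset_card_eq_add_one {α : Type*} [DecidableEq α] {σ S : Finset α}
    (h : σ ⊆ S) : #{t ∈ S.powerset | σ ⊆ t ∧ #t = #σ + 1} = #S - #σ := by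
  have himage : {t ∈ S.powerset | σ ⊆ t ∧ #t = #σ + 1} = (S \ σ).image (insert · σ) := by
    ext t
    simp only [mem_filter, mem_powerset, mem_image, mem_sdiff, eq_comm (a := #t)]
    rw [← exists_eq_insert_iff]
    constructor
    · rintro ⟨htS, a, ha, rfl⟩
      exact ⟨a, ⟨htS (mem_insert_self a σ), ha⟩, rfl⟩
    · rintro ⟨a, ⟨haS, ha⟩, rfl⟩
      exact ⟨insert_subset haS h, a, ha, rfl⟩
  rw [himage, card_image_of_injOn fun a ha b _ hab => (insert_inj (mem_sdiff.mp ha).2).mp hab,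
    card_sdiff_of_subset h]

def offDiagHess (τ : Finset (Fin n)) (q : MP n) : Matrix (Fin n) (Fin n) ℝ :=
  of fun i j => if i ≠ j ∧ i ∉ τ ∧ j ∉ τ then eval 𝟙 (pderiv i (pderiv j (derivSet τ q))) else 0

theorem offDiagHess_apply_of_ne {τ : Finset (Fin n)} {i j : Fin n} (h : i ≠ j ∧ i ∉ τ ∧ j ∉ τ)
    (q : MP n) : offDiagHess τ q i j = eval 𝟙 (derivSet (insert i (insert j τ)) q) := by
  have hi : i ∉ insert j τ := by simp [h.1, h.2.1]
  rw [offDiagHess, of_apply, if_pos h, derivSet_insert hi, derivSet_insert h.2.2]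

def multiaffinePoly (c : Finset (Fin n) → ℝ) : MP n := ∑ S, C (c S) * ∏ i ∈ S, X i

section Multiaffine

variable {c : Finset (Fin n) → ℝ}

theorem eval_one_derivSet_multiaffinePoly (τ : Finset (Fin n)) :
    eval 𝟙 (derivSet τ (multiaffinePoly c)) = ∑ S with τ ⊆ S, c S := by
  simp only [multiaffinePoly, derivSet_sum, derivSet_C_mul, derivSet_prod_X, map_sum, sum_filter]
  refine sum_congr rfl fun S _ => ?_
  split_ifs <;> simp

theorem pderiv_pderiv_self_multiaffinePoly (i : Fin n) :
    pderiv i (pderiv i (multiaffinePoly c)) = 0 := by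
  simp only [multiaffinePoly, map_sum]
  refine sum_eq_zero fun S _ => ?_
  by_cases h : i ∈ S <;> simp [pderiv_prod_X, h]

theorem pderiv_pderiv_self_derivSet_multiaffinePoly (τ : Finset (Fin n)) (i : Fin n) :
    pderiv i (pderiv i (derivSet τ (multiaffinePoly c))) = 0 := by
  rw [pderiv_derivSet, pderiv_derivSet, pderiv_pderiv_self_multiaffinePoly, derivSet_zero]

theorem pderiv_derivSet_multiaffinePoly_of_mem {τ : Finset (Fin n)} {i : Fin n} (hi : i ∈ τ) :
    pderiv i (derivSet τ (multiaffinePoly c)) = 0 := by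
  rw [← insert_erase hi, derivSet_insert (notMem_erase i τ),
    pderiv_pderiv_self_derivSet_multiaffinePoly]

theorem sum_supersets_le_of_subset (hc : ∀ S, 0 ≤ c S) {σ τ : Finset (Fin n)} (h : τ ⊆ σ) :
    ∑ S with σ ⊆ S, c S ≤ ∑ S with τ ⊆ S, c S :=
  sum_le_sum_of_subset_of_nonneg (monotone_filter_right _ fun _ _ => h.trans)
    fun S _ _ => hc S

theorem offDiagHess_multiaffinePoly (τ : Finset (Fin n)) :
    offDiagHess τ (multiaffinePoly c) = hessOne (derivSet τ (multiaffinePoly c)) := by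
  ext i j
  rw [offDiagHess, hessOne, of_apply, of_apply]
  split_ifs with h
  · rfl
  obtain rfl | hi | hj : i = j ∨ i ∈ τ ∨ j ∈ τ := by tauto
  · rw [pderiv_pderiv_self_derivSet_multiaffinePoly, map_zero]
  · rw [pderiv_pderiv_comm, pderiv_derivSet_multiaffinePoly_of_mem hi, map_zero, map_zero]
  · rw [pderiv_derivSet_multiaffinePoly_of_mem hj, map_zero, map_zero]

theorem offDiagHess_multiaffinePoly_eq_zero (hc : ∀ S, 0 ≤ c S) {τ : Finset (Fin n)}
    (h : eval 𝟙 (derivSet τ (multiaffinePoly c)) = 0) : offDiagHess τ (multiaffinePoly c) = 0 := by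
  ext i j
  by_cases hij : i ≠ j ∧ i ∉ τ ∧ j ∉ τ
  · rw [eval_one_derivSet_multiaffinePoly] at h
    rw [Matrix.zero_apply, offDiagHess_apply_of_ne hij, eval_one_derivSet_multiaffinePoly]
    have hτ : τ ⊆ insert i (insert j τ) := (subset_insert _ _).trans (subset_insert _ _)
    exact le_antisymm (h ▸ sum_supersets_le_of_subset hc hτ) (sum_nonneg fun S _ => hc S)
  · simp [offDiagHess, hij]

theorem exists_forall_dotProduct_offDiagHess_mulVec_nonpos (hc : ∀ S, 0 ≤ c S)
    (hslc : StronglyLogConcaveAtOne (multiaffinePoly c)) (τ : Finset (Fin n)) :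
    ∃ g : Fin n → ℝ, ∀ x, g ⬝ᵥ x = 0 → x ⬝ᵥ offDiagHess τ (multiaffinePoly c) *ᵥ x ≤ 0 := by
  rcases (show 0 ≤ eval 𝟙 (derivSet τ (multiaffinePoly c)) by
    rw [eval_one_derivSet_multiaffinePoly]; exact sum_nonneg fun S _ => hc S).eq_or_lt with
    hzero | hpos
  · exact ⟨0, fun x _ => by simp [offDiagHess_multiaffinePoly_eq_zero hc hzero.symm]⟩
  · refine ⟨gradOne (derivSet τ (multiaffinePoly c)), fun x hx => ?_⟩
    rw [offDiagHess_multiaffinePoly]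
    exact (hslc τ.toList).dotProduct_hessOne_mulVec_nonpos hpos hx

end Multiaffine

def IsBalancedWeighting (d : ℕ) (c w : Finset (Fin n) → ℝ) : Prop :=
  (∀ S ∈ Xp n c, #S = d → w S = c S) ∧
    ∀ τ ∈ Xp n c, #τ < d → w τ = ∑ σ ∈ Xp n c with τ ⊆ σ ∧ #σ = #τ + 1, w σ

section Weights

open scoped Nat

variable {d : ℕ} {c w : Finset (Fin n) → ℝ}

theorem card_le_of_mem_Xp (hdeg : ∀ S, c S ≠ 0 → #S = d) {σ : Finset (Fin n)}
    (hσ : σ ∈ Xp n c) : #σ ≤ d := by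
  obtain ⟨S, hS, hσS⟩ := (mem_filter.mp hσ).2
  exact hdeg S hS ▸ card_le_card hσS

theorem sum_supersets_eq_zero_of_notMem_Xp {σ : Finset (Fin n)} (hσ : σ ∉ Xp n c) :
    ∑ S with σ ⊆ S, c S = 0 :=
  sum_eq_zero fun S hS => by_contra fun hcS => hσ (by simp_all [Xp])

theorem sum_covers_sum_supersets (hdeg : ∀ S, c S ≠ 0 → #S = d) (σ : Finset (Fin n)) :
    ∑ σ' ∈ Xp n c with σ ⊆ σ' ∧ #σ' = #σ + 1, ∑ S with σ' ⊆ S, c S =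
      ((d - #σ : ℕ) : ℝ) * ∑ S with σ ⊆ S, c S := by
  have hcount (S : Finset (Fin n)) :
      ∑ σ' ∈ Xp n c with σ ⊆ σ' ∧ #σ' = #σ + 1, (if σ' ⊆ S then c S else 0) =
        if σ ⊆ S then ((d - #σ : ℕ) : ℝ) * c S else 0 := by
    rw [sum_ite, sum_const_zero, add_zero, sum_const, nsmul_eq_mul, filter_filter]
    by_cases hcS : c S = 0
    · simp [hcS]
    have hcovers : {σ' ∈ Xp n c | (σ ⊆ σ' ∧ #σ' = #σ + 1) ∧ σ' ⊆ S} =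
        {t ∈ S.powerset | σ ⊆ t ∧ #t = #σ + 1} := by
      ext t
      simp only [Xp, mem_filter, mem_univ, true_and, mem_powerset]
      exact ⟨fun ⟨_, hcov, htS⟩ => ⟨htS, hcov⟩, fun ⟨htS, hcov⟩ => ⟨⟨S, hcS, htS⟩, hcov, htS⟩⟩
    split_ifs with hσS
    · rw [hcovers, card_filter_powerset_card_eq_add_one hσS, hdeg S hcS]
    · rw [hcovers, card_eq_zero.mpr (filter_eq_empty_iff.mpr fun t ht hcov =>
        hσS (hcov.1.trans (mem_powerset.mp ht))), Nat.cast_zero, zero_mul]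
  calc ∑ σ' ∈ Xp n c with σ ⊆ σ' ∧ #σ' = #σ + 1, ∑ S with σ' ⊆ S, c S
      = ∑ σ' ∈ Xp n c with σ ⊆ σ' ∧ #σ' = #σ + 1, ∑ S, if σ' ⊆ S then c S else 0 :=
        sum_congr rfl fun _ _ => sum_filter _ _
    _ = ∑ S, if σ ⊆ S then ((d - #σ : ℕ) : ℝ) * c S else 0 := by
        rw [sum_comm]; exact sum_congr rfl fun S _ => hcount S
    _ = ((d - #σ : ℕ) : ℝ) * ∑ S with σ ⊆ S, c S := by
        simp only [sum_filter, mul_sum, mul_ite, mul_zero]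

theorem IsBalancedWeighting.eq_factorial_mul (hw : IsBalancedWeighting d c w)
    (hdeg : ∀ S, c S ≠ 0 → #S = d) {σ : Finset (Fin n)} (hσ : σ ∈ Xp n c) :
    w σ = (d - #σ)! * ∑ S with σ ⊆ S, c S := by
  induction hk : d - #σ generalizing σ with
  | zero =>
    have hcard : #σ = d := le_antisymm (card_le_of_mem_Xp hdeg hσ) (by omega)
    rw [hw.1 σ hσ hcard, Nat.factorial_zero, Nat.cast_one, one_mul, sum_filter,
      sum_eq_single_of_mem σ (mem_univ σ)]
    · simp
    refine fun S _ hSσ => ite_eq_right_iff.mpr fun hσS => by_contra fun hcS => hSσ ?_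
    exact (eq_of_subset_of_card_le hσS (by rw [hdeg S hcS, hcard])).symm
  | succ k ih =>
    rw [hw.2 σ hσ (by omega)]
    have hcovers : ∀ σ' ∈ {σ' ∈ Xp n c | σ ⊆ σ' ∧ #σ' = #σ + 1},
        w σ' = k ! * ∑ S with σ' ⊆ S, c S := fun σ' h' => by
      rw [mem_filter] at h'
      exact ih h'.1 (by omega)
    rw [sum_congr rfl hcovers, ← mul_sum, sum_covers_sum_supersets hdeg, hk, ← mul_assoc,
      Nat.factorial_succ]
    push_cast
    ring

theorem IsBalancedWeighting.linkMat_eq_smul_offDiagHess (hw : IsBalancedWeighting d c w)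
    (hdeg : ∀ S, c S ≠ 0 → #S = d) (τ : Finset (Fin n)) :
    linkMat n (Xp n c) w τ = ((d - (#τ + 2))! : ℝ) • offDiagHess τ (multiaffinePoly c) := by
  ext i j
  rw [Matrix.smul_apply, linkMat, of_apply]
  by_cases hij : i ≠ j ∧ i ∉ τ ∧ j ∉ τ
  · have hcard : #(insert i (insert j τ)) = #τ + 2 := by
      rw [card_insert_of_notMem (by simp [hij.1, hij.2.1]), card_insert_of_notMem hij.2.2]
    rw [offDiagHess_apply_of_ne hij, eval_one_derivSet_multiaffinePoly, smul_eq_mul]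
    by_cases hX : insert i (insert j τ) ∈ Xp n c
    · rw [if_pos ⟨hij.1, hij.2.1, hij.2.2, hX⟩, hw.eq_factorial_mul hdeg hX, hcard]
    · rw [if_neg fun h => hX h.2.2.2, sum_supersets_eq_zero_of_notMem_Xp hX, mul_zero]
  · rw [if_neg fun h => hij ⟨h.1, h.2.1, h.2.2.1⟩, offDiagHess, of_apply, if_neg hij, smul_zero]

end Weights

theorem stmt5_general (n d : ℕ) (c : Finset (Fin n) → ℝ)
    (hnn : ∀ S, 0 ≤ c S) (hdeg : ∀ S, c S ≠ 0 → S.card = d)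
    (p : MP n) (hp : p = ∑ S : Finset (Fin n), C (c S) * ∏ i ∈ S, X i)
    (hslc : StronglyLogConcaveAtOne p) :
    -- the Hessian of `∂_τ p` at `𝟙` (with zero diagonal, indexed by pairs `i,j ∉ τ`,
    -- zero-padded elsewhere) has at most one strictly positive eigenvalue
    (∀ τ : Finset (Fin n), τ.card ≤ d - 2 →
      ∀ hA : (Matrix.of fun i j =>
          if i ≠ j ∧ i ∉ τ ∧ j ∉ τ then
            eval (fun _ => (1:ℝ)) (pderiv i (pderiv j (derivSet τ p)))
          else (0:ℝ)).IsHermitian,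
        (Finset.univ.filter fun i => 0 < hA.eigenvalues i).card ≤ 1) ∧
    -- consequently, `X^p` with any balanced weighting extending `w(S) = c_S` on the
    -- maximal faces is a 0-local spectral expander
    (∀ w : Finset (Fin n) → ℝ,
      (∀ S ∈ Xp n c, S.card = d → w S = c S) →
      (∀ τ ∈ Xp n c, τ.card < d →
        w τ = ∑ σ ∈ (Xp n c).filter (fun σ => τ ⊆ σ ∧ σ.card = τ.card + 1), w σ) →
      ∀ τ ∈ Xp n c, τ.card ≤ d - 2 →
        ∀ hA : (linkMat n (Xp n c) w τ).IsHermitian,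
          (Finset.univ.filter fun i => 0 < hA.eigenvalues i).card ≤ 1) := by
  subst hp
  have hneg := exists_forall_dotProduct_offDiagHess_mulVec_nonpos hnn hslc
  refine ⟨fun τ _ hA => ?_, fun w hw_max hw_sum τ _ _ hA => ?_⟩
  · obtain ⟨g, hg⟩ := hneg τ
    exact hA.card_pos_eigenvalues_le_one g hg
  · obtain ⟨g, hg⟩ := hneg τ
    refine hA.card_pos_eigenvalues_le_one g fun x hx => ?_
    have hw : IsBalancedWeighting d c w := ⟨hw_max, hw_sum⟩
    rw [hw.linkMat_eq_smul_offDiagHess hdeg, smul_mulVec, dotProduct_smul, smul_eq_mul]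
    exact mul_nonpos_of_nonneg_of_nonpos (by positivity) (hg x hx)

theorem stmt5 (n d : ℕ) (hd : 2 ≤ d) (c : Finset (Fin n) → ℝ)
    (hnn : ∀ S, 0 ≤ c S) (hdeg : ∀ S, c S ≠ 0 → S.card = d)
    (p : MP n) (hp : p = ∑ S : Finset (Fin n), C (c S) * ∏ i ∈ S, X i)
    (hslc : StronglyLogConcaveAtOne p) :
    -- the Hessian of `∂_τ p` at `𝟙` (with zero diagonal, indexed by pairs `i,j ∉ τ`,
    -- zero-padded elsewhere) has at most one strictly positive eigenvalue
    (∀ τ : Finset (Fin n), τ.card ≤ d - 2 →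
      ∀ hA : (Matrix.of fun i j =>
          if i ≠ j ∧ i ∉ τ ∧ j ∉ τ then
            eval (fun _ => (1:ℝ)) (pderiv i (pderiv j (derivSet τ p)))
          else (0:ℝ)).IsHermitian,
        (Finset.univ.filter fun i => 0 < hA.eigenvalues i).card ≤ 1) ∧
    -- consequently, `X^p` with any balanced weighting extending `w(S) = c_S` on the
    -- maximal faces is a 0-local spectral expander
    (∀ w : Finset (Fin n) → ℝ,
      (∀ S ∈ Xp n c, S.card = d → w S = c S) →
      (∀ τ ∈ Xp n c, τ.card < d →
        w τ = ∑ σ ∈ (Xp n c).filter (fun σ => τ ⊆ σ ∧ σ.card = τ.card + 1), w σ) →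
      ∀ τ ∈ Xp n c, τ.card ≤ d - 2 →
        ∀ hA : (linkMat n (Xp n c) w τ).IsHermitian,
          (Finset.univ.filter fun i => 0 < hA.eigenvalues i).card ≤ 1) :=
  stmt5_general n d c hnn hdeg p hp hslc

end
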